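/- Let d ≥ 2 and m ≥ 1 be natural numbers, let p = ⌈log_d(m+1)⌉, and let h ≥ p be a natural number. Then for every injective map ψ: {0, 1, …, m} → {1, …, d^h}, one has Σ_{i=1}^{m} δ_{d,h}(ψ(0), ψ(i)) ≥ 2·(p·(m+1) − (d^p − 1)/(d−1)), where (d^p − 1)/(d−1) is an exact integer division. -/

import Mathlib

/-!
Write `K i` for the level at which the leaves `ψ 0` and `ψ i` meet, so that the sum is
`2 * ∑ K i`. Counting by layers, `∑ K i ≥ ∑_{k < p} #{i | k < K i}`. The indices with
`K i ≤ k` all lie, together with `0`, in the block of `d ^ k` consecutive leaves containing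
`ψ 0`, so by injectivity there are at most `d ^ k - 1` of them and `#{i | k < K i} ≥ m + 1 - d ^ k`.
Summing over `k < p` gives `p (m + 1) - (1 + d + ⋯ + d ^ (p - 1))`.
-/

/-- The canonical leaf distance on the complete `d`-regular tree of height `h`:
`δ_{d,h}(t,j) = 2·min{k ∈ {1,…,h} : ⌊(t−1)/d^k⌋ = ⌊(j−1)/d^k⌋}` for `t ≠ j`,
and `δ_{d,h}(t,t) = 0`. -/
noncomputable def leafDist (d h t j : ℕ) : ℕ :=
  if t = j then 0
  else 2 * sInf {k : ℕ | 1 ≤ k ∧ k ≤ h ∧ (t - 1) / d ^ k = (j - 1) / d ^ k}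

open Finset

lemma Nat.div_pow_eq_div_pow_of_le {a b d k k' : ℕ} (hk : k ≤ k')
    (h : a / d ^ k = b / d ^ k) : a / d ^ k' = b / d ^ k' := by
  obtain ⟨j, rfl⟩ := Nat.exists_eq_add_of_le hk
  rw [pow_add, ← Nat.div_div_eq_div_mul, ← Nat.div_div_eq_div_mul, h]

lemma card_filter_div_eq_le {ι : Type*} {s : Finset ι} {g : ι → ℕ} (hg : Set.InjOn g s)
    {b : ℕ} (hb : 0 < b) (q : ℕ) : #{i ∈ s | g i / b = q} ≤ b := by
  calc #{i ∈ s | g i / b = q} ≤ #(range b) := by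
        refine card_le_card_of_injOn (g · % b) (fun i _ => mem_range.2 (Nat.mod_lt _ hb)) ?_
        intro i hi j hj hij
        simp only [coe_filter, Set.mem_ofPred_eq] at hi hj
        refine hg hi.1 hj.1 ?_
        rw [← Nat.div_add_mod (g i) b, ← Nat.div_add_mod (g j) b, hi.2, hj.2]
        exact congrArg (b * q + ·) hij
    _ = b := card_range b

lemma sum_card_filter_lt_le {ι : Type*} (s : Finset ι) (f : ι → ℕ) (p : ℕ) :
    ∑ k ∈ range p, #{i ∈ s | k < f i} ≤ ∑ i ∈ s, f i := by
  calc ∑ k ∈ range p, #{i ∈ s | k < f i} = ∑ i ∈ s, #{k ∈ range p | k < f i} := by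
        simp only [card_filter]
        exact sum_comm
    _ ≤ ∑ i ∈ s, #(range (f i)) := by
        gcongr with i
        exact fun k hk => mem_range.2 (mem_filter.1 hk).2
    _ = ∑ i ∈ s, f i := by simp only [card_range]

lemma sum_range_sub_pow {d n p : ℕ} (hd : 2 ≤ d) (hpow : ∀ k < p, d ^ k ≤ n) :
    ∑ k ∈ range p, (n - d ^ k) = p * n - (d ^ p - 1) / (d - 1) := by
  rw [sum_tsub_distrib _ fun k hk => hpow k (mem_range.1 hk), sum_const, card_range,
    smul_eq_mul, Nat.geomSum_eq hd]

noncomputable def meetLevel (d h t j : ℕ) : ℕ :=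
  sInf {k : ℕ | 1 ≤ k ∧ k ≤ h ∧ (t - 1) / d ^ k = (j - 1) / d ^ k}

section meetLevel

variable {d h t j : ℕ}

lemma leafDist_of_ne (hne : t ≠ j) : leafDist d h t j = 2 * meetLevel d h t j :=
  if_neg hne

lemma lt_meetLevel_of_div_ne {k : ℕ} (ht : t - 1 < d ^ h) (hj : j - 1 < d ^ h) (hkh : k < h)
    (hk : (t - 1) / d ^ k ≠ (j - 1) / d ^ k) : k < meetLevel d h t j := by
  have hh_mem : h ∈ {k : ℕ | 1 ≤ k ∧ k ≤ h ∧ (t - 1) / d ^ k = (j - 1) / d ^ k} :=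
    ⟨by omega, le_rfl, by rw [Nat.div_eq_of_lt ht, Nat.div_eq_of_lt hj]⟩
  refine Nat.lt_of_not_le fun hle => hk ?_
  exact Nat.div_pow_eq_div_pow_of_le hle (Nat.sInf_mem ⟨h, hh_mem⟩).2.2

end meetLevel

section star

variable {d h m : ℕ} {ψ : ℕ → ℕ}

lemma card_filter_lt_meetLevel_ge (hd : 0 < d) (hinj : Set.InjOn ψ (Set.Iic m))
    (hrange : ∀ i ≤ m, 1 ≤ ψ i ∧ ψ i ≤ d ^ h) {k : ℕ} (hkh : k < h) :
    m + 1 - d ^ k ≤ #{i ∈ Icc 1 m | k < meetLevel d h (ψ 0) (ψ i)} := by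
  set sameBlock : ℕ → Prop := fun i => (ψ i - 1) / d ^ k = (ψ 0 - 1) / d ^ k
  have hshift : Set.InjOn (ψ · - 1) (range (m + 1) : Set ℕ) := by
    intro i hi j hj hij
    simp only [coe_range, Set.mem_Iio] at hi hj
    have := (hrange i (by omega)).1
    have := (hrange j (by omega)).1
    exact hinj (Set.mem_Iic.2 (by omega)) (Set.mem_Iic.2 (by omega)) (by simp only at hij; omega)
  have hblock : #{i ∈ Icc 1 m | sameBlock i} + 1 ≤ d ^ k := by
    calc #{i ∈ Icc 1 m | sameBlock i} + 1 = #(insert 0 {i ∈ Icc 1 m | sameBlock i}) := by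
          rw [card_insert_of_notMem (by simp)]
      _ ≤ #{i ∈ range (m + 1) | sameBlock i} := by
          refine card_le_card fun i hi => ?_
          rcases mem_insert.1 hi with rfl | hi
          · simp [sameBlock]
          · simp only [mem_filter, mem_Icc, mem_range] at hi ⊢
            exact ⟨by omega, hi.2⟩
      _ ≤ d ^ k := card_filter_div_eq_le hshift (pow_pos hd k) _
  have hfar : {i ∈ Icc 1 m | ¬ k < meetLevel d h (ψ 0) (ψ i)} ⊆ {i ∈ Icc 1 m | sameBlock i} := by
    intro i hi
    simp only [mem_filter, mem_Icc] at hi ⊢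
    refine ⟨hi.1, by_contra fun hne => hi.2 (lt_meetLevel_of_div_ne ?_ ?_ hkh (Ne.symm hne))⟩
    · have := hrange 0 (Nat.zero_le m); omega
    · have := hrange i hi.1.2; omega
  have hsplit := card_filter_add_card_filter_not (s := Icc 1 m)
    (fun i => k < meetLevel d h (ψ 0) (ψ i))
  have := card_le_card hfar
  simp only [Nat.card_Icc] at hsplit
  omega

end star

theorem star_local_lower_bound_general (d m p h : ℕ) (hd : 2 ≤ d)
    (hp : IsLeast {k : ℕ | m + 1 ≤ d ^ k} p) (hph : p ≤ h)
    (ψ : ℕ → ℕ) (hinj : Set.InjOn ψ (Set.Iic m))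
    (hrange : ∀ i ≤ m, 1 ≤ ψ i ∧ ψ i ≤ d ^ h) :
    2 * (p * (m + 1) - (d ^ p - 1) / (d - 1))
      ≤ ∑ i ∈ Finset.Icc 1 m, leafDist d h (ψ 0) (ψ i) := by
  have hpow : ∀ k < p, d ^ k ≤ m + 1 := fun k hk =>
    by_contra fun hlt => absurd (hp.2 (show m + 1 ≤ d ^ k by omega)) (by omega)
  have hdist : ∑ i ∈ Icc 1 m, leafDist d h (ψ 0) (ψ i)
      = 2 * ∑ i ∈ Icc 1 m, meetLevel d h (ψ 0) (ψ i) := by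
    rw [mul_sum]
    refine sum_congr rfl fun i hi => leafDist_of_ne fun heq => ?_
    have := hinj (Set.mem_Iic.2 (Nat.zero_le m)) (Set.mem_Iic.2 (mem_Icc.1 hi).2) heq
    exact absurd (mem_Icc.1 hi).1 (by omega)
  rw [hdist, ← sum_range_sub_pow hd hpow]
  gcongr 2 * ?_
  calc ∑ k ∈ range p, (m + 1 - d ^ k)
      ≤ ∑ k ∈ range p, #{i ∈ Icc 1 m | k < meetLevel d h (ψ 0) (ψ i)} :=
        sum_le_sum fun k hk =>
          card_filter_lt_meetLevel_ge (by omega) hinj hrange (by have := mem_range.1 hk; omega)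
    _ ≤ ∑ i ∈ Icc 1 m, meetLevel d h (ψ 0) (ψ i) := sum_card_filter_lt_le _ _ _

/-- for `d ≥ 2`, `m ≥ 1`, `p = ⌈log_d (m+1)⌉` (the least `p` with
`m+1 ≤ d^p`) and any `h ≥ p`, every injective map `ψ : {0,…,m} → {1,…,d^h}`
satisfies `Σ_{i=1}^{m} δ_{d,h}(ψ(0), ψ(i)) ≥ 2·(p·(m+1) − (d^p − 1)/(d−1))`. -/
theorem star_local_lower_bound (d m p h : ℕ) (hd : 2 ≤ d) (hm : 1 ≤ m)
    (hp : IsLeast {k : ℕ | m + 1 ≤ d ^ k} p) (hph : p ≤ h)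
    (ψ : ℕ → ℕ) (hinj : Set.InjOn ψ (Set.Iic m))
    (hrange : ∀ i ≤ m, 1 ≤ ψ i ∧ ψ i ≤ d ^ h) :
    2 * (p * (m + 1) - (d ^ p - 1) / (d - 1))
      ≤ ∑ i ∈ Finset.Icc 1 m, leafDist d h (ψ 0) (ψ i) :=
  star_local_lower_bound_general d m p h hd hp hph ψ hinj hrange
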